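/- arXiv:2003.14143 — 2 statements merged into one kernel-verified Lean document; each statement's English description precedes it below -/
import Mathlib

section
/- Let 1 ≤ j ≤ k-1, a the unique integer in [1,k-j] with a ≡ k mod (k-j), b = k-j-a, p = (1-ε)/(C(k-j,a)·C(n-j,k-j)) with ε ∈ (0,1) constant, and ℓ = (j·ln n + ω)/(-ln(1-ε)) with ω = ω(n) → ∞, ω = o(ln n). Then (n)_v · p^ℓ / (a!b!)^ℓ → 0 as n → ∞, where v = (k-j)ℓ + j. -/
/-!
With `M = (n-j)_{k-j}`, the identity `a! b! C(k-j,a) C(n-j,k-j) = M` turns the expression into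
`(n)_v (1-ε)^ℓ / M^ℓ`. Splitting off the first `j` factors of `(n)_v` and cutting the remaining
`(k-j)ℓ` factors into `ℓ` blocks of length `k-j`, each at most `M`, gives `(n)_v ≤ n^j M^ℓ`, so the
expression is at most `n^j (1-ε)^ℓ`. The choice of `ℓ` makes `(1-ε)^ℓ ≤ n^{-j} e^{-ω} / (1-ε)`,
and `e^{-ω} → 0`.
-/

open Filter Real

open scoped Nat

namespace Nat

theorem descFactorial_mul_le_pow (m r l : ℕ) :
    m.descFactorial (r * l) ≤ m.descFactorial r ^ l := by
  induction l generalizing m with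
  | zero => simp
  | succ l ih =>
    rw [← descFactorial_mul_descFactorial (Nat.le_mul_of_pos_right r l.succ_pos), mul_add_one,
      Nat.add_sub_cancel, pow_succ]
    gcongr
    exact (ih _).trans (Nat.pow_le_pow_left (descFactorial_le _ (Nat.sub_le m r)) l)

theorem descFactorial_mul_add_le (n r l j : ℕ) :
    n.descFactorial (r * l + j) ≤ n ^ j * (n - j).descFactorial r ^ l := by
  rw [← descFactorial_mul_descFactorial (Nat.le_add_left j (r * l)), Nat.add_sub_cancel, mul_comm]
  exact Nat.mul_le_mul (descFactorial_le_pow n j) (descFactorial_mul_le_pow _ _ _)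

theorem factorial_mul_factorial_mul_choose_mul_choose {r a : ℕ} (ha : a ≤ r) (N : ℕ) :
    a ! * (r - a)! * r.choose a * N.choose r = N.descFactorial r := by
  rw [descFactorial_eq_factorial_mul_choose, ← choose_mul_factorial_mul_factorial ha]
  ring

end Nat

theorem descFactorial_mul_pow_div_le {r a : ℕ} (ha : a ≤ r) (n j l : ℕ) {q : ℝ} (hq : 0 ≤ q) :
    (n.descFactorial (r * l + j) : ℝ) * (q / ((r.choose a : ℝ) * ((n - j).choose r : ℝ))) ^ l /
      ((a ! * (r - a)! : ℕ) : ℝ) ^ l ≤ (n : ℝ) ^ j * q ^ l := by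
  have hM : ((r.choose a : ℝ) * ((n - j).choose r : ℝ)) * ((a ! * (r - a)! : ℕ) : ℝ) =
      (n - j).descFactorial r := by
    rw [← Nat.factorial_mul_factorial_mul_choose_mul_choose ha]
    push_cast
    ring
  have hdesc :
      (n.descFactorial (r * l + j) : ℝ) ≤ (n : ℝ) ^ j * ((n - j).descFactorial r : ℝ) ^ l := by
    exact_mod_cast Nat.descFactorial_mul_add_le n r l j
  rw [mul_div_assoc, ← div_pow, div_div, hM, div_pow, ← mul_div_assoc]
  refine div_le_of_le_mul₀ (by positivity) (by positivity) ?_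
  calc _ ≤ (n : ℝ) ^ j * ((n - j).descFactorial r : ℝ) ^ l * q ^ l := by gcongr
    _ = _ := by ring

theorem pow_floor_div_neg_log_le {q : ℝ} (hq0 : 0 < q) (hq1 : q < 1) (x : ℝ) :
    q ^ ⌊x / -log q⌋₊ ≤ exp (-x) / q := by
  have hfloor : x < (⌊x / -log q⌋₊ + 1) * -log q :=
    (div_lt_iff₀ (neg_pos.mpr (log_neg hq0 hq1))).mp (Nat.lt_floor_add_one _)
  rw [le_div_iff₀ hq0, ← pow_succ, ← exp_log (pow_pos hq0 _), log_pow, exp_le_exp]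
  push_cast
  linarith

theorem natCast_pow_mul_exp_neg_mul_log_add {n : ℕ} (hn : 0 < n) (j : ℕ) (x : ℝ) :
    (n : ℝ) ^ j * exp (-(j * log n + x)) = exp (-x) := by
  rw [neg_add, exp_add, exp_neg, exp_nat_mul, exp_log (by exact_mod_cast hn), ← mul_assoc,
    mul_inv_cancel₀ (by positivity), one_mul]

theorem stmt16_general (k j a b : ℕ) (ε : ℝ)
    (ha2 : a ≤ k - j)
    (hb : b = k - j - a)
    (hε0 : 0 < ε) (hε1 : ε < 1)
    (ω : ℕ → ℝ) (hω : Tendsto ω atTop atTop)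
    (ℓ : ℕ → ℕ)
    (hℓ : ∀ n, ℓ n = ⌊((j : ℝ) * Real.log n + ω n) / (-Real.log (1 - ε))⌋₊)
    (p : ℕ → ℝ)
    (hp : ∀ n, p n = (1 - ε) /
      ((Nat.choose (k - j) a : ℝ) * (Nat.choose (n - j) (k - j) : ℝ)))
    (v : ℕ → ℕ) (hv : ∀ n, v n = (k - j) * ℓ n + j) :
    Tendsto (fun n => (Nat.descFactorial n (v n) : ℝ) * p n ^ ℓ n /
        ((Nat.factorial a * Nat.factorial b : ℕ) : ℝ) ^ ℓ n) atTop (nhds 0) := by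
  subst hb
  have hq0 : 0 < 1 - ε := by linarith
  have hq1 : 1 - ε < 1 := by linarith
  have hbound : ∀ n, 0 < n → (Nat.descFactorial n (v n) : ℝ) * p n ^ ℓ n /
      ((a ! * (k - j - a)! : ℕ) : ℝ) ^ ℓ n ≤ exp (-ω n) / (1 - ε) := fun n hn =>
    calc _ ≤ (n : ℝ) ^ j * (1 - ε) ^ ℓ n := by
          rw [hp, hv]
          exact descFactorial_mul_pow_div_le ha2 n j (ℓ n) hq0.le
      _ ≤ (n : ℝ) ^ j * (exp (-(j * log n + ω n)) / (1 - ε)) := by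
          rw [hℓ]
          gcongr
          exact pow_floor_div_neg_log_le hq0 hq1 _
      _ = exp (-ω n) / (1 - ε) := by
          rw [← mul_div_assoc, natCast_pow_mul_exp_neg_mul_log_add hn]
  have hlim : Tendsto (fun n => exp (-ω n) / (1 - ε)) atTop (nhds 0) := by
    simpa using (tendsto_exp_atBot.comp (tendsto_neg_atTop_atBot.comp hω)).div_const (1 - ε)
  refine tendsto_of_tendsto_of_tendsto_of_le_of_le' tendsto_const_nhds hlim
    (Eventually.of_forall fun n => ?_) ((eventually_gt_atTop 0).mono hbound)
  have hpn : 0 ≤ p n := by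
    rw [hp]
    exact div_nonneg hq0.le (by positivity)
  positivity

/-- Subcritical first moment: with `1 ≤ j ≤ k-1`, `a` the unique integer in `[1, k-j]`
with `a ≡ k (mod k-j)`, `b = k-j-a`, `p = (1-ε)/(C(k-j,a)·C(n-j,k-j))` for a constant
`ε ∈ (0,1)`, and `ℓ = (j·ln n + ω)/(-ln(1-ε))` where `ω → ∞` and `ω = o(ln n)`, we have
`(n)_v · p^ℓ / (a!b!)^ℓ → 0` as `n → ∞`, where `v = (k-j)ℓ + j`. -/
theorem stmt16 (k j a b : ℕ) (ε : ℝ)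
    (hj : 1 ≤ j) (hjk : j ≤ k - 1)
    (ha1 : 1 ≤ a) (ha2 : a ≤ k - j) (ha3 : a % (k - j) = k % (k - j))
    (hb : b = k - j - a)
    (hε0 : 0 < ε) (hε1 : ε < 1)
    (ω : ℕ → ℝ) (hω : Tendsto ω atTop atTop)
    (hωo : ω =o[atTop] fun n : ℕ => Real.log n)
    (ℓ : ℕ → ℕ)
    (hℓ : ∀ n, ℓ n = ⌊((j : ℝ) * Real.log n + ω n) / (-Real.log (1 - ε))⌋₊)
    (p : ℕ → ℝ)
    (hp : ∀ n, p n = (1 - ε) /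
      ((Nat.choose (k - j) a : ℝ) * (Nat.choose (n - j) (k - j) : ℝ)))
    (v : ℕ → ℕ) (hv : ∀ n, v n = (k - j) * ℓ n + j) :
    Tendsto (fun n => (Nat.descFactorial n (v n) : ℝ) * p n ^ ℓ n /
        ((Nat.factorial a * Nat.factorial b : ℕ) : ℝ) ^ ℓ n) atTop (nhds 0) :=
  stmt16_general k j a b ε ha2 hb hε0 hε1 ω hω ℓ hℓ p hp v hv
end

section
/- Let c₁ ≥ c₂ ≥ ... ≥ c_r ≥ 1 be integers summing to q, and let y_q(r) denote the number of such r-tuples (partitions of q into exactly r parts). Then y_q(r+1) ≤ q · y_q(r) for all r ≥ 1. -/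
/-!
Merging the two largest parts of a partition of `q` into `r + 1` parts yields a partition into
`r` parts. The original partition is recovered from the merged one and the second largest part,
a number in `[1, q]`, by splitting that number off the largest part.
-/

namespace Multiset

lemma sup_mem_of_ne_zero {α : Type*} [LinearOrder α] [OrderBot α] {m : Multiset α}
    (h : m ≠ 0) : m.sup ∈ m := by
  obtain ⟨a, ha, hmax⟩ := m.exists_max_image id h
  rwa [le_antisymm (sup_le.2 hmax) (le_sup ha)]

lemma sup_add_sum_erase_sup (m : Multiset ℕ) : m.sup + (m.erase m.sup).sum = m.sum := by
  rcases eq_or_ne m 0 with rfl | h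
  · rfl
  · rw [← sum_cons, cons_erase (sup_mem_of_ne_zero h)]

-- Counted with multiplicity: this is `m.sup` when the maximum is repeated.
def secondSup (m : Multiset ℕ) : ℕ := (m.erase m.sup).sup

def mergeTop (m : Multiset ℕ) : Multiset ℕ :=
  (m.sup + m.secondSup) ::ₘ (m.erase m.sup).erase m.secondSup

def splitTop (m : Multiset ℕ) (b : ℕ) : Multiset ℕ :=
  (m.sup - b) ::ₘ b ::ₘ m.erase m.sup

lemma sum_mergeTop (m : Multiset ℕ) : m.mergeTop.sum = m.sum := by
  rw [mergeTop, sum_cons, ← sup_add_sum_erase_sup m, ← sup_add_sum_erase_sup (m.erase m.sup),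
    secondSup, add_assoc]

lemma secondSup_mem {m : Multiset ℕ} (hm : 2 ≤ card m) : m.secondSup ∈ m.erase m.sup := by
  apply sup_mem_of_ne_zero
  rw [← card_pos, card_erase_of_mem (sup_mem_of_ne_zero (card_pos.1 (by omega)))]
  exact Nat.sub_pos_of_lt hm

lemma card_mergeTop {m : Multiset ℕ} (hm : 2 ≤ card m) : card m.mergeTop + 1 = card m := by
  have hsup := sup_mem_of_ne_zero (card_pos.1 (by omega : 0 < card m))
  rw [mergeTop, card_cons, card_erase_of_mem (secondSup_mem hm), card_erase_of_mem hsup,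
    Nat.pred_eq_sub_one, Nat.pred_eq_sub_one]
  omega

lemma pos_of_mem_mergeTop {m : Multiset ℕ} (hm : m ≠ 0) (hpos : ∀ {x}, x ∈ m → 0 < x)
    {x : ℕ} (hx : x ∈ m.mergeTop) : 0 < x := by
  rcases mem_cons.1 hx with rfl | hx
  · exact Nat.add_pos_left (hpos (sup_mem_of_ne_zero hm)) _
  · exact hpos (erase_subset _ _ (erase_subset _ _ hx))

lemma sup_mergeTop (m : Multiset ℕ) : m.mergeTop.sup = m.sup + m.secondSup := by
  rw [mergeTop, sup_cons, sup_eq_left]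
  exact (sup_mono fun _ hx ↦ erase_subset _ _ (erase_subset _ _ hx)).trans le_self_add

lemma splitTop_mergeTop {m : Multiset ℕ} (hm : 2 ≤ card m) :
    m.mergeTop.splitTop m.secondSup = m := by
  rw [splitTop, sup_mergeTop, Nat.add_sub_cancel, mergeTop, erase_cons_head,
    cons_erase (secondSup_mem hm), cons_erase (sup_mem_of_ne_zero (card_pos.1 (by omega)))]

end Multiset

namespace Nat.Partition

open Multiset

lemma parts_ne_zero {n : ℕ} (hn : 0 < n) (P : n.Partition) : P.parts ≠ 0 := by
  rintro h
  simpa [h] using P.parts_sum.trans_gt hn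

def mergeTop {n : ℕ} (hn : 0 < n) (P : n.Partition) : n.Partition where
  parts := P.parts.mergeTop
  parts_pos := pos_of_mem_mergeTop (P.parts_ne_zero hn) P.parts_pos
  parts_sum := P.parts.sum_mergeTop.trans P.parts_sum

lemma secondSup_mem_Icc {n : ℕ} (P : n.Partition) (hP : 2 ≤ P.parts.card) :
    P.parts.secondSup ∈ Finset.Icc 1 n := by
  have hmem := erase_subset _ _ (secondSup_mem hP)
  exact Finset.mem_Icc.2 ⟨P.parts_pos hmem, (le_sum_of_mem hmem).trans_eq P.parts_sum⟩

theorem card_filter_card_parts_succ_le {n r : ℕ} (hn : 0 < n) (hr : 0 < r) :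
    ((Finset.univ : Finset n.Partition).filter fun P => P.parts.card = r + 1).card ≤
      n * ((Finset.univ : Finset n.Partition).filter fun P => P.parts.card = r).card := by
  set A := (Finset.univ : Finset n.Partition).filter fun P => P.parts.card = r + 1
  set B := (Finset.univ : Finset n.Partition).filter fun P => P.parts.card = r
  have two_le : ∀ P ∈ A, 2 ≤ P.parts.card := fun P hP => by
    rw [(Finset.mem_filter.1 hP).2]
    omega
  have hB : n * B.card = (B ×ˢ Finset.Icc 1 n).card := by
    rw [Finset.card_product, Nat.card_Icc, Nat.add_sub_cancel, mul_comm]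
  rw [hB]
  refine Finset.card_le_card_of_injOn (fun P => (P.mergeTop hn, P.parts.secondSup)) ?_ ?_
  · intro P hP
    have hcard : P.parts.card = r + 1 := (Finset.mem_filter.1 hP).2
    refine Finset.mem_product.2
      ⟨Finset.mem_filter.2 ⟨Finset.mem_univ _, ?_⟩, P.secondSup_mem_Icc (two_le P hP)⟩
    exact Nat.add_right_cancel (m := 1) ((card_mergeTop (two_le P hP)).trans hcard)
  · intro P₁ hP₁ P₂ hP₂ heq
    obtain ⟨hmerge, hsecond⟩ := Prod.mk.inj heq
    ext1
    calc P₁.parts = (P₁.mergeTop hn).parts.splitTop P₁.parts.secondSup :=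
          (splitTop_mergeTop (two_le P₁ hP₁)).symm
      _ = (P₂.mergeTop hn).parts.splitTop P₂.parts.secondSup := by rw [hmerge, hsecond]
      _ = P₂.parts := splitTop_mergeTop (two_le P₂ hP₂)

end Nat.Partition

/-- Let `y_q(r)` be the number of partitions of `q` into exactly `r` parts
(tuples `c₁ ≥ ... ≥ c_r ≥ 1` with `c₁ + ... + c_r = q`). Then
`y_q(r+1) ≤ q · y_q(r)` for all `r ≥ 1`. -/
theorem stmt17 (q r : ℕ) (hq : 1 ≤ q) (hr : 1 ≤ r)
    (y : ℕ → ℕ)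
    (hy : ∀ m, y m = ((Finset.univ : Finset (Nat.Partition q)).filter
        fun P => Multiset.card P.parts = m).card) :
    y (r + 1) ≤ q * y r := by
  rw [hy, hy]
  exact Nat.Partition.card_filter_card_parts_succ_le hq hr
end
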